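/- arXiv:1712.04548 — 2 statements merged into one kernel-verified Lean document; each statement's English description precedes it below -/
import Mathlib

section
/- Let k be a positive integer and let f : ℕ → ℕ give the branching of a sequence of complete f(h)-ary trees of height h. Suppose there exist constants c > 0 and C > 0 such that f(h) ≤ (h/(e·k))^{1/k} − C·h^c for all sufficiently large h. Then θ_k(f(h), h) → 0 as h → ∞. -/
/-!
A union bound over leaves and over jump schedules `0 = r₀ < ⋯ < r_t = h`: the labels of
`t + 1` fixed vertices are increasing with probability `1 / (t + 1)!`. Weighting a schedule whose
gaps `g_i ∈ [1, k]` sum to `h` by `ρ ^ h = ∏ ρ ^ g_i` bounds the number of schedules with `t` jumps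
by `ρ ^ (-h) * (ρ + ⋯ + ρ ^ k) ^ t`, hence `θ_k(n, h) ≤ n ^ h * ρ ^ (-h) * exp (ρ + ⋯ + ρ ^ k)`
for every `ρ ≥ 0`. With `ρ ^ k = h / k` and `A = (h / (e k)) ^ (1 / k)` this is
`(n / A) ^ h * exp (ρ + ⋯ + ρ ^ (k - 1))`. If `n ≤ A - δ` then `(n / A) ^ h ≤ exp (-δ h / A)`,
and `h / A ≥ k ρ ^ (k - 1)` outweighs `ρ + ⋯ + ρ ^ (k - 1) ≤ k ρ ^ (k - 1)` as soon as `δ ≥ 1`;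
so `θ_k(n, h) ≤ exp (1 - δ)`, and `δ = C h ^ c → ∞`.
-/

open MeasureTheory Filter

/-- A vertex of the complete `n`-ary tree of height `h`: at depth `i ≤ h`,
a vertex is a word of length `i` over an alphabet of size `n`. -/
abbrev TreeVertex (n h : ℕ) : Type := (i : Fin (h + 1)) × (Fin i.val → Fin n)

/-- The vertex at depth `i` on the root-to-leaf path determined by `leaf`:
the length-`i` prefix of `leaf`. -/
def pathVertex {n h : ℕ} (leaf : Fin h → Fin n) (i : Fin (h + 1)) : TreeVertex n h :=
  ⟨i, fun j => leaf ⟨j.val, lt_of_lt_of_le j.isLt (Nat.lt_succ_iff.mp i.isLt)⟩⟩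

/-- The event (set of labelings `ω` of the vertices) that some root-to-leaf path of
the complete `n`-ary tree of height `h` is `k`-accessible: there is a leaf and
indices `0 = r 0 < r 1 < ⋯ < r t = h` with consecutive gaps at most `k` along which
the labels are strictly increasing. -/
def kAccessibleEvent (k n h : ℕ) : Set (TreeVertex n h → ℝ) :=
  {ω | ∃ leaf : Fin h → Fin n, ∃ t : ℕ, ∃ r : Fin (t + 1) → Fin (h + 1),
    StrictMono r ∧ r 0 = 0 ∧ r (Fin.last t) = Fin.last h ∧
    (∀ i : Fin t, (r i.succ).val ≤ (r i.castSucc).val + k) ∧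
    StrictMono fun i => ω (pathVertex leaf (r i))}

/-- The vertices are labelled by i.i.d. Uniform[0,1] random variables: the product
over all vertices of Lebesgue measure restricted to `[0,1]`. -/
noncomputable def treeLabelMeasure (n h : ℕ) : Measure (TreeVertex n h → ℝ) :=
  Measure.pi fun _ => (volume : Measure ℝ).restrict (Set.Icc 0 1)

/-- `theta k n h` is the probability that the labelled complete `n`-ary tree of
height `h` contains a `k`-accessible root-to-leaf path. -/
noncomputable def theta (k n h : ℕ) : ℝ :=
  (treeLabelMeasure n h (kAccessibleEvent k n h)).toReal

open Finset Real
open scoped Nat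

theorem Fin.sum_succ_tsub_castSucc {t : ℕ} {a : Fin (t + 1) → ℕ} (ha : Monotone a) :
    ∑ i : Fin t, (a i.succ - a i.castSucc) = a (Fin.last t) - a 0 := by
  induction t with
  | zero => simp
  | succ t ih =>
    have h₀ : a 0 ≤ a (Fin.last t).castSucc := ha (Fin.zero_le _)
    have h₁ : a (Fin.last t).castSucc ≤ a (Fin.last t).succ := ha (Fin.castSucc_le_succ _)
    have := ih (a := a ∘ Fin.castSucc) (ha.comp Fin.strictMono_castSucc.monotone)
    simp only [Function.comp_apply, Fin.castSucc_zero] at this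
    rw [Fin.sum_univ_castSucc]
    simp only [Fin.succ_castSucc, this, Fin.succ_last, Nat.succ_eq_add_one] at h₁ ⊢
    omega

theorem measureReal_strictMono_comp_le {ι : Type*} [Fintype ι] (ν : Measure ℝ)
    [IsProbabilityMeasure ν] {m : ℕ} {v : Fin m → ι} (hv : v.Injective) :
    (Measure.pi fun _ : ι => ν).real {ω | StrictMono (ω ∘ v)} ≤ (m ! : ℝ)⁻¹ := by
  classical
  set μ := Measure.pi fun _ : ι => ν
  set A : Equiv.Perm (Fin m) → Set (ι → ℝ) := fun σ => {ω | StrictMono (ω ∘ v ∘ σ)}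
  have hA : ∀ σ, MeasurableSet (A σ) := fun σ => by
    simp only [A, StrictMono, Set.ofPred_forall]
    exact .iInter fun i => .iInter fun j => .iInter fun _ =>
      measurableSet_lt (measurable_pi_apply _) (measurable_pi_apply _)
  have hdisj : Pairwise (Function.onFun Disjoint A) := fun σ τ hστ => by
    refine Set.disjoint_left.mpr fun ω hσ hτ => hστ ?_
    have sort_eq {p : Equiv.Perm (Fin m)} (hp : StrictMono (ω ∘ v ∘ p)) :
        p = Tuple.sort (ω ∘ v) :=
      Tuple.eq_sort_iff.mpr ⟨hp.monotone, fun i j hij h => absurd h (hp hij).ne⟩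
    rw [sort_eq hσ, sort_eq hτ]
  have hA_eq : ∀ σ, μ.real (A σ) = μ.real (A 1) := fun σ => by
    let e := σ.viaFintypeEmbedding ⟨v, hv⟩
    have he (i : Fin m) : e (v i) = v (σ i) := σ.viaFintypeEmbedding_apply_image ⟨v, hv⟩ i
    have happ (ω : ι → ℝ) (x : ι) :
        MeasurableEquiv.piCongrLeft (fun _ => ℝ) e.symm ω x = ω (e x) := by
      simpa using MeasurableEquiv.piCongrLeft_apply_apply (β := fun _ => ℝ) e.symm ω (e x)
    have hpre : MeasurableEquiv.piCongrLeft (fun _ => ℝ) e.symm ⁻¹' A 1 = A σ := by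
      ext ω
      simp [A, Function.comp_def, happ, he]
    rw [← hpre, (measurePreserving_piCongrLeft (fun _ => ν) e.symm).measureReal_preimage
      (hA 1).nullMeasurableSet]
  have hsum := sum_measureReal_le_measureReal_univ (μ := μ) (s := univ) (fun σ _ => hA σ)
    (hdisj.set_pairwise _)
  simp only [hA_eq, sum_const, card_univ, Fintype.card_perm, Fintype.card_fin, nsmul_eq_mul,
    probReal_univ] at hsum
  rw [← one_div, le_div_iff₀ (by positivity)]
  exact (mul_comm _ _).trans_le hsum

def IsJumpSchedule (k h t : ℕ) (r : Fin (t + 1) → Fin (h + 1)) : Prop :=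
  StrictMono r ∧ r 0 = 0 ∧ r (Fin.last t) = Fin.last h ∧
    ∀ i : Fin t, (r i.succ : ℕ) ≤ r i.castSucc + k

def jumpGaps {h t : ℕ} (r : Fin (t + 1) → Fin (h + 1)) (i : Fin t) : ℕ :=
  r i.succ - r i.castSucc

namespace IsJumpSchedule

variable {k h t : ℕ} {r : Fin (t + 1) → Fin (h + 1)}

theorem length_le_height (hr : IsJumpSchedule k h t r) : t ≤ h := by
  simpa using Fintype.card_le_of_injective r hr.1.injective

theorem jumpGaps_mem_piFinset (hr : IsJumpSchedule k h t r) :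
    jumpGaps r ∈ Fintype.piFinset fun _ => Icc 1 k := by
  simp only [Fintype.mem_piFinset, mem_Icc, jumpGaps]
  intro i
  have := hr.1 i.castSucc_lt_succ
  have := hr.2.2.2 i
  rw [Fin.lt_def] at *
  omega

theorem sum_jumpGaps (hr : IsJumpSchedule k h t r) : ∑ i, jumpGaps r i = h := by
  have := Fin.sum_succ_tsub_castSucc (a := fun i => (r i : ℕ)) fun _ _ hij => hr.1.monotone hij
  simpa [jumpGaps, hr.2.1, hr.2.2.1] using this

theorem jumpGaps_injOn : Set.InjOn (jumpGaps (h := h) (t := t)) {r | IsJumpSchedule k h t r} := by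
  intro r hr r' hr' hgaps
  funext j
  induction j using Fin.induction with
  | zero => rw [hr.2.1, hr'.2.1]
  | succ i ih =>
    have hgap := congrFun hgaps i
    have := hr.1 i.castSucc_lt_succ
    have := hr'.1 i.castSucc_lt_succ
    simp only [jumpGaps] at hgap
    rw [Fin.lt_def] at *
    ext
    omega

end IsJumpSchedule

theorem card_jumpSchedule_mul_pow_le (k h t : ℕ) {ρ : ℝ} (hρ : 0 ≤ ρ) :
    (Nat.card {r // IsJumpSchedule k h t r} : ℝ) * ρ ^ h ≤ (∑ j ∈ Icc 1 k, ρ ^ j) ^ t := by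
  classical
  set S := univ.filter (IsJumpSchedule k h t)
  have hS : ∀ r ∈ S, IsJumpSchedule k h t r := fun r hr => (mem_filter.mp hr).2
  calc (Nat.card {r // IsJumpSchedule k h t r} : ℝ) * ρ ^ h
      = ∑ r ∈ S, ∏ i, ρ ^ jumpGaps r i := by
        rw [Nat.card_eq_fintype_card, Fintype.card_subtype, cast_card, sum_mul, one_mul]
        refine sum_congr rfl fun r hr => ?_
        rw [prod_pow_eq_pow_sum, (hS r hr).sum_jumpGaps]
    _ = ∑ d ∈ S.image jumpGaps, ∏ i, ρ ^ d i := by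
        rw [sum_image fun r hr r' hr' => IsJumpSchedule.jumpGaps_injOn (hS r hr) (hS r' hr')]
    _ ≤ ∑ d ∈ Fintype.piFinset fun _ => Icc 1 k, ∏ i, ρ ^ d i := by
        refine sum_le_sum_of_subset_of_nonneg ?_ fun _ _ _ => by positivity
        simpa [image_subset_iff] using fun r hr => (hS r hr).jumpGaps_mem_piFinset
    _ = (∑ j ∈ Icc 1 k, ρ ^ j) ^ t := by
        rw [← prod_univ_sum, prod_const, card_univ, Fintype.card_fin]

instance : IsProbabilityMeasure ((volume : Measure ℝ).restrict (Set.Icc 0 1)) :=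
  ⟨by simp⟩

instance (n h : ℕ) : IsProbabilityMeasure (treeLabelMeasure n h) := by
  unfold treeLabelMeasure; infer_instance

theorem theta_le_sum_card (k n h : ℕ) :
    theta k n h ≤ n ^ h * ∑ t ∈ range (h + 1),
      (Nat.card {r // IsJumpSchedule k h t r} : ℝ) / (t + 1)! := by
  classical
  set μ := treeLabelMeasure n h
  set B : (Fin h → Fin n) → (t : ℕ) → (Fin (t + 1) → Fin (h + 1)) → Set (TreeVertex n h → ℝ) :=
    fun leaf t r => {ω | StrictMono fun i => ω (pathVertex leaf (r i))}
  have hsub : kAccessibleEvent k n h ⊆ ⋃ leaf, ⋃ t ∈ range (h + 1),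
      ⋃ r ∈ univ.filter (IsJumpSchedule k h t), B leaf t r := by
    rintro ω ⟨leaf, t, r, hmono, h0, hlast, hjump, hω⟩
    have hr : IsJumpSchedule k h t r := ⟨hmono, h0, hlast, hjump⟩
    simp only [Set.mem_iUnion, mem_range, mem_filter, mem_univ, true_and]
    exact ⟨leaf, t, Nat.lt_succ_of_le hr.length_le_height, r, hr, hω⟩
  have hB : ∀ leaf t r, IsJumpSchedule k h t r → μ.real (B leaf t r) ≤ ((t + 1)! : ℝ)⁻¹ :=
    fun leaf t r hr => measureReal_strictMono_comp_le _
      fun i j hij => hr.1.injective (congrArg Sigma.fst hij)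
  calc theta k n h = μ.real (kAccessibleEvent k n h) := rfl
    _ ≤ ∑ leaf, ∑ t ∈ range (h + 1), ∑ r ∈ univ.filter (IsJumpSchedule k h t),
          μ.real (B leaf t r) :=
        (measureReal_mono hsub).trans <| (measureReal_iUnion_fintype_le _).trans <|
          sum_le_sum fun _ _ => (measureReal_biUnion_finset_le _ _).trans <|
            sum_le_sum fun _ _ => measureReal_biUnion_finset_le _ _
    _ ≤ ∑ leaf : Fin h → Fin n, ∑ t ∈ range (h + 1), ∑ r ∈ univ.filter (IsJumpSchedule k h t),
          ((t + 1)! : ℝ)⁻¹ := by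
        gcongr with leaf _ t _ r hr
        exact hB leaf t r (mem_filter.mp hr).2
    _ = n ^ h * ∑ t ∈ range (h + 1), (Nat.card {r // IsJumpSchedule k h t r} : ℝ) / (t + 1)! := by
        simp [Nat.card_eq_fintype_card, Fintype.card_subtype, div_eq_mul_inv]

theorem theta_mul_pow_le (k n h : ℕ) {ρ : ℝ} (hρ : 0 ≤ ρ) :
    theta k n h * ρ ^ h ≤ n ^ h * exp (∑ j ∈ Icc 1 k, ρ ^ j) := by
  set g := ∑ j ∈ Icc 1 k, ρ ^ j
  calc theta k n h * ρ ^ h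
      ≤ (n ^ h * ∑ t ∈ range (h + 1),
          (Nat.card {r // IsJumpSchedule k h t r} : ℝ) / (t + 1)!) * ρ ^ h := by
        gcongr
        exact theta_le_sum_card k n h
    _ = n ^ h * ∑ t ∈ range (h + 1),
          (Nat.card {r // IsJumpSchedule k h t r} : ℝ) * ρ ^ h / (t + 1)! := by
        rw [mul_assoc, sum_mul]
        simp only [div_mul_eq_mul_div]
    _ ≤ n ^ h * ∑ t ∈ range (h + 1), g ^ t / t ! := by
        gcongr with t
        · exact card_jumpSchedule_mul_pow_le k h t hρ
        · exact t.le_succ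
    _ ≤ n ^ h * exp g := by
        gcongr
        exact sum_le_exp_of_nonneg (by positivity) _

theorem sum_Icc_pow_le {ρ : ℝ} (hρ : 1 ≤ ρ) (k : ℕ) :
    ∑ j ∈ Icc 1 (k + 1), ρ ^ j ≤ ρ ^ (k + 1) + (k + 1) * ρ ^ k := by
  rw [sum_Icc_succ_top (by omega), add_comm]
  gcongr
  calc ∑ j ∈ Icc 1 k, ρ ^ j ≤ #(Icc 1 k) • ρ ^ k :=
        sum_le_card_nsmul _ _ _ fun j hj => pow_le_pow_right₀ hρ (mem_Icc.mp hj).2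
    _ ≤ (k + 1) * ρ ^ k := by
        simp only [Nat.card_Icc, add_tsub_cancel_right, nsmul_eq_mul]
        gcongr
        linarith

theorem theta_le_exp_of_pow_eq {k n h : ℕ} (hk : 0 < k) {ρ δ : ℝ} (hρ : 1 ≤ ρ)
    (hρk : k * ρ ^ k = h) (hδ : 1 ≤ δ) (hn : (n : ℝ) ≤ ρ / exp (1 / k) - δ) :
    theta k n h ≤ exp (1 - δ) := by
  obtain ⟨m, rfl⟩ : ∃ m, k = m + 1 := ⟨k - 1, by omega⟩
  push_cast at hρk hn ⊢
  set q := exp (1 / (m + 1))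
  set A := ρ / q with hA_def
  have hq : 1 ≤ q := one_le_exp (by positivity)
  have hA : 0 < A := by positivity
  have hnA : (n : ℝ) ^ h ≤ A ^ h * exp (-(δ / A * h)) := by
    have : (n : ℝ) ≤ A * exp (-(δ / A)) := calc
      (n : ℝ) ≤ A * (-(δ / A) + 1) := by rw [mul_add, mul_neg, mul_div_cancel₀ _ hA.ne']; linarith
      _ ≤ A * exp (-(δ / A)) := by gcongr; exact add_one_le_exp _
    calc (n : ℝ) ^ h ≤ (A * exp (-(δ / A))) ^ h := by gcongr
      _ = A ^ h * exp (-(δ / A * h)) := by rw [mul_pow, ← exp_nat_mul]; ring_nf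
  have hAh : A ^ h * exp (ρ ^ (m + 1)) = ρ ^ h := by
    have : (h : ℝ) * (1 / (m + 1)) = ρ ^ (m + 1) := by rw [← hρk]; field_simp
    rw [div_pow, ← exp_nat_mul, this, div_mul_cancel₀ _ (exp_pos _).ne']
  have hθ : theta (m + 1) n h * ρ ^ h ≤ exp ((m + 1) * ρ ^ m - δ / A * h) * ρ ^ h := calc
    theta (m + 1) n h * ρ ^ h ≤ n ^ h * exp (∑ j ∈ Icc 1 (m + 1), ρ ^ j) :=
        theta_mul_pow_le _ n h (by linarith)
    _ ≤ A ^ h * exp (-(δ / A * h)) * exp (ρ ^ (m + 1) + (m + 1) * ρ ^ m) := by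
        gcongr
        exact sum_Icc_pow_le hρ m
    _ = exp ((m + 1) * ρ ^ m - δ / A * h) * ρ ^ h := by
        rw [← hAh, mul_assoc, ← exp_add, mul_comm (exp _), mul_assoc, ← exp_add]
        ring_nf
  have hexponent : (m + 1) * ρ ^ m - δ / A * h ≤ 1 - δ := by
    have hP : 1 ≤ (m + 1) * ρ ^ m := by nlinarith [one_le_pow₀ (n := m) hρ]
    have : δ / A * h = δ * q * ((m + 1) * ρ ^ m) := by
      rw [hA_def, ← hρk]
      field_simp
      ring
    rw [this]
    generalize (m + 1) * ρ ^ m = P at hP ⊢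
    nlinarith [mul_le_mul_of_nonneg_left hq (by positivity : 0 ≤ δ * P),
      mul_nonneg (sub_nonneg.mpr hP) (sub_nonneg.mpr hδ)]
  calc theta (m + 1) n h ≤ exp ((m + 1) * ρ ^ m - δ / A * h) :=
        le_of_mul_le_mul_right hθ (by positivity)
    _ ≤ exp (1 - δ) := exp_le_exp.mpr hexponent

theorem theta_le_exp_one_sub {k n h : ℕ} (hk : 0 < k) (hkh : k ≤ h) {δ : ℝ} (hδ : 1 ≤ δ)
    (hn : (n : ℝ) ≤ ((h : ℝ) / (exp 1 * k)) ^ ((1 : ℝ) / k) - δ) :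
    theta k n h ≤ exp (1 - δ) := by
  have hk' : (0 : ℝ) < k := by exact_mod_cast hk
  have hhk : 1 ≤ (h : ℝ) / k := by rw [one_le_div hk']; exact_mod_cast hkh
  refine theta_le_exp_of_pow_eq hk (ρ := ((h : ℝ) / k) ^ ((1 : ℝ) / k))
    (one_le_rpow hhk (by positivity)) ?_ hδ ?_
  · rw [one_div, rpow_inv_natCast_pow (by positivity) hk.ne']
    field_simp
  · rwa [mul_comm, ← div_div, div_rpow (by positivity) (exp_pos 1).le, exp_one_rpow] at hn

theorem theta_tendsto_zero_of_kth_root_minus_power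
    (k : ℕ) (hk : 0 < k) (f : ℕ → ℕ) (c C : ℝ) (hc : 0 < c) (hC : 0 < C)
    (hf : ∀ᶠ h : ℕ in atTop,
      (f h : ℝ) ≤ ((h : ℝ) / (Real.exp 1 * k)) ^ ((1 : ℝ) / k) - C * (h : ℝ) ^ c) :
    Tendsto (fun h : ℕ => theta k (f h) h) atTop (nhds 0) := by
  have hδ : Tendsto (fun h : ℕ => C * (h : ℝ) ^ c) atTop atTop :=
    ((tendsto_rpow_atTop hc).comp tendsto_natCast_atTop_atTop).const_mul_atTop hC
  have hbound : ∀ᶠ h : ℕ in atTop, theta k (f h) h ≤ exp (1 - C * (h : ℝ) ^ c) := by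
    filter_upwards [hf, eventually_ge_atTop k, hδ.eventually_ge_atTop 1] with h hfh hkh h1
    exact theta_le_exp_one_sub hk hkh h1 hfh
  have hexp : Tendsto (fun h : ℕ => exp (1 - C * (h : ℝ) ^ c)) atTop (nhds 0) :=
    tendsto_exp_atBot.comp (tendsto_atBot_add_const_left _ 1 (tendsto_neg_atTop_atBot.comp hδ))
  exact squeeze_zero' (.of_forall fun _ => ENNReal.toReal_nonneg) hbound hexp
end

section
/- Let f : ℕ → ℕ give the branching of a sequence of complete f(h)-ary trees of height h. If h/e + log(h)/(2e) − f(h) → ∞ as h → ∞, then θ_1(f(h), h) → 0 as h → ∞. -/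
open MeasureTheory Filter

/-!
Along a 1-accessible path every label exceeds its parent's, so by a union bound over the `n ^ h`
root-to-leaf paths, `θ₁(n, h) ≤ n ^ h / (h + 1)!`: the `h + 1` i.i.d. labels of a path are
exchangeable, and the events "increasing in the order `σ`" are disjoint for the `(h + 1)!`
permutations `σ`. Since `(h + 1)! ≥ ((h + 1) / e) ^ (h + 1)`, the hypothesis
`n ≤ h / e + log h / (2e)` bounds this by `e √h / (h + 1) → 0`.
-/

open Real
open scoped ENNReal Nat Topology

section StrictMonoEvents

variable {ι : Type*} {m : ℕ}

theorem measurableSet_setOf_strictMono_comp (p : Fin m → ι) :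
    MeasurableSet {ω : ι → ℝ | StrictMono (ω ∘ p)} := by
  simp only [StrictMono, Set.ofPred_forall]
  exact .iInter fun i => .iInter fun j => .iInter fun _ =>
    measurableSet_lt (measurable_pi_apply _) (measurable_pi_apply _)

theorem pairwise_disjoint_setOf_strictMono_comp_perm {α : Type*} [LinearOrder α]
    (p : Fin m → ι) :
    Pairwise (Function.onFun Disjoint fun σ : Equiv.Perm (Fin m) =>
      {ω : ι → α | StrictMono (ω ∘ p ∘ σ)}) := by
  intro σ τ hστ
  refine Set.disjoint_left.2 fun ω (hσ : StrictMono _) (hτ : StrictMono _) => hστ ?_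
  have heq := Tuple.unique_monotone (f := ω ∘ p) hσ.monotone hτ.monotone
  refine Equiv.ext fun i => (σ.symm_apply_eq.mp ?_).symm
  exact (hσ.injective <| (congrFun heq i).trans (by simp)).symm

variable [Fintype ι] (μ : Measure ℝ) [IsProbabilityMeasure μ]

theorem measure_pi_setOf_strictMono_comp_perm (p : Fin m ↪ ι) (σ : Equiv.Perm (Fin m)) :
    Measure.pi (fun _ : ι => μ) {ω | StrictMono (ω ∘ p ∘ σ)} =
      Measure.pi (fun _ : ι => μ) {ω | StrictMono (ω ∘ p)} := by
  classical
  -- `σ` transported to the coordinates `p`, extended by the identity elsewhere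
  set e : Equiv.Perm ι := σ.viaEmbedding p
  have hpre : MeasurableEquiv.piCongrLeft (fun _ => ℝ) e ⁻¹' {ω | StrictMono (ω ∘ p ∘ σ)} =
      {ω | StrictMono (ω ∘ p)} := by
    ext ω
    have hcomp : MeasurableEquiv.piCongrLeft (fun _ => ℝ) e ω ∘ p ∘ σ = ω ∘ p := by
      ext i
      simp only [Function.comp_apply, ← σ.viaEmbedding_apply p i]
      exact MeasurableEquiv.piCongrLeft_apply_apply e (β := fun _ => ℝ) ω (p i)
    simp only [Set.mem_preimage, Set.mem_ofPred_eq, hcomp]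
  rw [← hpre, (measurePreserving_piCongrLeft (fun _ : ι => μ) e).measure_preimage
    (measurableSet_setOf_strictMono_comp _).nullMeasurableSet]

theorem measure_pi_setOf_strictMono_comp_le (p : Fin m ↪ ι) :
    Measure.pi (fun _ : ι => μ) {ω | StrictMono (ω ∘ p)} ≤ (m ! : ℝ≥0∞)⁻¹ := by
  have hsum := sum_measure_le_measure_univ (μ := Measure.pi fun _ : ι => μ) (s := Finset.univ)
    (fun (σ : Equiv.Perm (Fin m)) _ => (measurableSet_setOf_strictMono_comp _).nullMeasurableSet)
    (fun σ _ τ _ hστ => (pairwise_disjoint_setOf_strictMono_comp_perm p hστ).aedisjoint)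
  simp only [measure_pi_setOf_strictMono_comp_perm, Finset.sum_const, Finset.card_univ,
    Fintype.card_perm, Fintype.card_fin, nsmul_eq_mul, measure_univ] at hsum
  rwa [ENNReal.le_inv_iff_mul_le, mul_comm]

end StrictMonoEvents

theorem Fin.val_eq_of_strictMono_of_le_succ {t h : ℕ} {r : Fin (t + 1) → Fin (h + 1)}
    (hr : StrictMono r) (h0 : r 0 = 0)
    (hgap : ∀ i : Fin t, (r i.succ : ℕ) ≤ r i.castSucc + 1) (i : Fin (t + 1)) :
    (r i : ℕ) = i := by
  induction i using Fin.induction with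
  | zero => simp [h0]
  | succ i ih =>
    have hlt : (r i.castSucc : ℕ) < r i.succ := hr Fin.castSucc_lt_succ
    have := hgap i
    simp only [Fin.val_castSucc, Fin.val_succ] at ih ⊢
    omega

theorem pathVertex_injective {n h : ℕ} (leaf : Fin h → Fin n) :
    Function.Injective (pathVertex leaf) :=
  fun _ _ hij => congrArg Sigma.fst hij

theorem kAccessibleEvent_one_subset (n h : ℕ) :
    kAccessibleEvent 1 n h ⊆ ⋃ leaf : Fin h → Fin n, {ω | StrictMono (ω ∘ pathVertex leaf)} := by
  rintro ω ⟨leaf, t, r, hr, h0, hlast, hgap, hinc⟩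
  have hval := Fin.val_eq_of_strictMono_of_le_succ hr h0 hgap
  obtain rfl : t = h := by simpa [hlast] using (hval (Fin.last t)).symm
  obtain rfl : r = id := funext fun i => Fin.ext (hval i)
  exact Set.mem_iUnion.2 ⟨leaf, hinc⟩

instance inst_s5 : IsProbabilityMeasure ((volume : Measure ℝ).restrict (Set.Icc 0 1)) :=
  ⟨by simp⟩

theorem treeLabelMeasure_kAccessibleEvent_one_le (n h : ℕ) :
    treeLabelMeasure n h (kAccessibleEvent 1 n h) ≤ (n : ℝ≥0∞) ^ h / (h + 1)! := by
  calc treeLabelMeasure n h (kAccessibleEvent 1 n h)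
      ≤ ∑ leaf : Fin h → Fin n, treeLabelMeasure n h {ω | StrictMono (ω ∘ pathVertex leaf)} :=
        (measure_mono (kAccessibleEvent_one_subset n h)).trans (measure_iUnion_fintype_le _ _)
    _ ≤ ∑ _leaf : Fin h → Fin n, ((h + 1)! : ℝ≥0∞)⁻¹ := Finset.sum_le_sum fun leaf _ =>
        measure_pi_setOf_strictMono_comp_le _ ⟨pathVertex leaf, pathVertex_injective leaf⟩
    _ = (n : ℝ≥0∞) ^ h / (h + 1)! := by simp [div_eq_mul_inv]

theorem theta_one_le (n h : ℕ) : theta 1 n h ≤ (n : ℝ) ^ h / (h + 1)! := by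
  have hfin : (n : ℝ≥0∞) ^ h / (h + 1)! ≠ ⊤ :=
    ENNReal.div_ne_top (by simp) (by exact_mod_cast (h + 1).factorial_ne_zero)
  simpa [theta] using ENNReal.toReal_mono hfin (treeLabelMeasure_kAccessibleEvent_one_le n h)

theorem div_exp_one_pow_le_factorial (m : ℕ) : ((m : ℝ) / exp 1) ^ m ≤ m ! := by
  have := pow_div_factorial_le_exp _ (Nat.cast_nonneg m) m
  rw [div_le_iff₀ (by positivity)] at this
  rw [div_pow, div_le_iff₀ (by positivity), exp_one_pow, mul_comm]
  exact this

theorem pow_div_factorial_succ_le {n h : ℕ} (hh : 0 < h)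
    (hn : (n : ℝ) ≤ h / exp 1 + log h / (2 * exp 1)) :
    (n : ℝ) ^ h / (h + 1)! ≤ exp 1 * √h / (h + 1) := by
  set x : ℝ := n * exp 1 / (h + 1)
  have hne : n * exp 1 ≤ h + log h / 2 := calc
    (n : ℝ) * exp 1 ≤ (h / exp 1 + log h / (2 * exp 1)) * exp 1 := by gcongr
    _ = h + log h / 2 := by field_simp
  have hx : x ≤ exp (log h / (2 * (h + 1))) := by
    refine le_trans ?_ (add_one_le_exp _)
    rw [div_le_iff₀ (by positivity)]
    have : (log h / (2 * (h + 1)) + 1) * (h + 1) = h + log h / 2 + 1 := by field_simp; ring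
    linarith
  have hxh : x ^ h ≤ √h := calc
    x ^ h ≤ exp (log h / (2 * (h + 1))) ^ h := by gcongr
    _ = exp (h / (h + 1) * (log h / 2)) := by rw [← exp_nat_mul]; congr 1; field_simp
    _ ≤ exp (log h / 2) := by
        gcongr
        exact mul_le_of_le_one_left (by positivity) (div_le_one_of_le₀ (by linarith) (by positivity))
    _ = √h := by rw [exp_half, exp_log (by positivity)]
  calc (n : ℝ) ^ h / (h + 1)!
      ≤ n ^ h / (((h + 1 : ℕ) : ℝ) / exp 1) ^ (h + 1) := by
        gcongr
        exact div_exp_one_pow_le_factorial (h + 1)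
    _ = exp 1 * x ^ h / (h + 1) := by
        simp only [x]; push_cast; rw [div_pow, div_pow, mul_pow]; field_simp; ring
    _ ≤ exp 1 * √h / (h + 1) := by gcongr

theorem tendsto_sqrt_div_add_one_atTop :
    Tendsto (fun h : ℕ => √h / (h + 1)) atTop (𝓝 0) := by
  have hinv : Tendsto (fun h : ℕ => 1 / √h) atTop (𝓝 0) := by
    simpa only [one_div, Function.comp_def] using
      tendsto_inv_atTop_zero.comp (tendsto_sqrt_atTop.comp tendsto_natCast_atTop_atTop)
  refine squeeze_zero (fun h => by positivity) (fun h => ?_) hinv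
  rcases Nat.eq_zero_or_pos h with rfl | hh
  · simp
  · rw [← sqrt_div_self']
    gcongr
    linarith

theorem theta_one_tendsto_zero_of_below_log_correction
    (f : ℕ → ℕ)
    (hf : Tendsto
      (fun h : ℕ => (h : ℝ) / Real.exp 1 + Real.log h / (2 * Real.exp 1) - (f h : ℝ))
      atTop atTop) :
    Tendsto (fun h : ℕ => theta 1 (f h) h) atTop (nhds 0) := by
  have hbound : ∀ᶠ h : ℕ in atTop, theta 1 (f h) h ≤ exp 1 * (√h / (h + 1)) := by
    filter_upwards [hf.eventually_ge_atTop 0, eventually_gt_atTop 0] with h hc hh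
    rw [← mul_div_assoc]
    exact (theta_one_le _ _).trans (pow_div_factorial_succ_le hh (sub_nonneg.mp hc))
  refine squeeze_zero' (.of_forall fun _ => ENNReal.toReal_nonneg) hbound ?_
  simpa using tendsto_sqrt_div_add_one_atTop.const_mul (exp 1)
end
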